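/- arXiv:1406.4075 — 2 statements merged into one kernel-verified Lean document; each statement's English description precedes it below -/
import Mathlib

section
/- Every regular interval exchange transformation is minimal. -/
open Set MeasureTheory

noncomputable section

/-- Left endpoint `γ i` of the `i`-th exchanged semi-interval. -/
def sepPt {s : ℕ} (l : ℝ) (len : Fin s → ℝ) (i : Fin s) : ℝ :=
  l + ∑ j ∈ Finset.univ.filter (fun j => j < i), len j

/-- Left endpoint `δ` of the image of the `i`-th exchanged semi-interval. -/
def imgPt {s : ℕ} (l : ℝ) (len : Fin s → ℝ) (π : Equiv.Perm (Fin s)) (i : Fin s) : ℝ :=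
  l + ∑ j ∈ Finset.univ.filter (fun j => π j < π i), len j

/-- `T` is the `s`-interval exchange transformation on `[l,r)` with lengths `len`
and permutation `π`, extended by the identity outside `[l,r)`. -/
def IsIET (s : ℕ) (l r : ℝ) (len : Fin s → ℝ) (π : Equiv.Perm (Fin s))
    (T : Equiv.Perm ℝ) : Prop :=
  l < r ∧ (∀ i, 0 < len i) ∧ (∑ i, len i) = r - l ∧
  (∀ z, z ∉ Set.Ico l r → T z = z) ∧
  ∀ i : Fin s, ∀ z ∈ Set.Ico (sepPt l len i) (sepPt l len i + len i),
    T z = z + (imgPt l len π i - sepPt l len i)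

/-- The two-sided orbit `{T^n z : n ∈ ℤ}`. -/
def orbitZ (T : Equiv.Perm ℝ) (z : ℝ) : Set ℝ := {w | ∃ n : ℤ, (T ^ n) z = w}

/-- Regularity (idoc): the orbits of the nonzero separation points are infinite
and pairwise disjoint. -/
def IsRegularIET (s : ℕ) (l : ℝ) (len : Fin s → ℝ) (T : Equiv.Perm ℝ) : Prop :=
  (∀ i : Fin s, (i : ℕ) ≠ 0 → (orbitZ T (sepPt l len i)).Infinite) ∧
  (∀ i j : Fin s, (i : ℕ) ≠ 0 → (j : ℕ) ≠ 0 → i ≠ j →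
    Disjoint (orbitZ T (sepPt l len i)) (orbitZ T (sepPt l len j)))

/-- Minimality: every (two-sided) orbit of a point of `[l,r)` is dense in `[l,r)`. -/
def IsMinimalOn (T : Equiv.Perm ℝ) (l r : ℝ) : Prop :=
  ∀ z ∈ Set.Ico l r, Set.Ico l r ⊆ closure (orbitZ T z)

/-- First return time of `z` in `I` (defined via `sInf`; meaningful when `T` is minimal). -/
def returnTime (T : Equiv.Perm ℝ) (I : Set ℝ) (z : ℝ) : ℕ :=
  sInf {n : ℕ | 0 < n ∧ (T ^ n) z ∈ I}

/-- The transformation induced by `T` on `I` (first-return map). -/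
def inducedMap (T : Equiv.Perm ℝ) (I : Set ℝ) (z : ℝ) : ℝ :=
  (T ^ returnTime T I z) z

/-- The transformation induced by `T` on `[u,v)` is an interval exchange
transformation on `k` intervals with data `(lam, σ)`. -/
def InducedData (T : Equiv.Perm ℝ) (u v : ℝ) (k : ℕ) (lam : Fin k → ℝ)
    (σ : Equiv.Perm (Fin k)) : Prop :=
  ∃ S : Equiv.Perm ℝ, IsIET k u v lam σ S ∧
    ∀ z ∈ Set.Ico u v, S z = inducedMap T (Set.Ico u v) z

/-- The semi-interval `[l,t)` is right admissible for `T`. -/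
def RightAdmissible (s : ℕ) (l r : ℝ) (len : Fin s → ℝ) (T : Equiv.Perm ℝ)
    (t : ℝ) : Prop :=
  l < t ∧ t < r ∧ ∃ (i : Fin s) (k : ℤ), t = (T ^ k) (sepPt l len i) ∧
    (0 < k → ∀ h : ℤ, 0 < h → h < k → t < (T ^ h) (sepPt l len i)) ∧
    (k ≤ 0 → ∀ h : ℤ, k < h → h ≤ 0 → t < (T ^ h) (sepPt l len i))

/-- `ρ⁺_{I,T}(z) = min {n > 0 : T^n z ∈ (u,v)}`. -/
def rhoPlusPt (T : Equiv.Perm ℝ) (u v z : ℝ) : ℕ :=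
  sInf {n : ℕ | 0 < n ∧ (T ^ n) z ∈ Set.Ioo u v}

/-- `ρ⁻_{I,T}(z) = min {n ≥ 0 : T^{-n} z ∈ (u,v)}`. -/
def rhoMinusPt (T : Equiv.Perm ℝ) (u v z : ℝ) : ℕ :=
  sInf {n : ℕ | (T⁻¹ ^ n) z ∈ Set.Ioo u v}

/-- The set of neighbours `N_{I,T}(z)` of `z` with respect to `I = [u,v)` and `T`. -/
def neighbours (T : Equiv.Perm ℝ) (u v z : ℝ) : Set ℝ :=
  {w | ∃ k : ℤ, -(rhoMinusPt T u v z : ℤ) ≤ k ∧ k < (rhoPlusPt T u v z : ℤ) ∧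
    w = (T ^ k) z}

/-- The set of division points `Div(I,T)` of `I = [u,v)` with respect to `T`. -/
def divPoints (s : ℕ) (l : ℝ) (len : Fin s → ℝ) (T : Equiv.Perm ℝ)
    (u v : ℝ) : Set ℝ :=
  ⋃ i : Fin s, neighbours T u v (sepPt l len i)

/-- The semi-interval `[u,v) ⊆ [l,r)` is admissible for `T`. -/
def Admissible (s : ℕ) (l r : ℝ) (len : Fin s → ℝ) (T : Equiv.Perm ℝ)
    (u v : ℝ) : Prop :=
  l ≤ u ∧ u < v ∧ v ≤ r ∧
  u ∈ divPoints s l len T u v ∪ {r} ∧ v ∈ divPoints s l len T u v ∪ {r}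

/-- A bundled regular `s`-interval exchange transformation. -/
structure RIET (s : ℕ) where
  l : ℝ
  r : ℝ
  len : Fin s → ℝ
  perm : Equiv.Perm (Fin s)
  T : Equiv.Perm ℝ
  isIET : IsIET s l r len perm T
  isReg : IsRegularIET s l len T

/-- The right endpoint `max (γ_s, δ_{π(s)})` of `Z(T)`. -/
def zPoint {s : ℕ} (X : RIET s) : ℝ :=
  if h : 0 < s then
    max (sepPt X.l X.len ⟨s - 1, by omega⟩)
      (imgPt X.l X.len X.perm (X.perm.symm ⟨s - 1, by omega⟩))
  else X.r

/-- The left endpoint `min (γ_2, δ_{π(2)})` of `Y(T)`. -/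
def yPoint {s : ℕ} (X : RIET s) : ℝ :=
  if h : 1 < s then
    min (sepPt X.l X.len ⟨1, h⟩) (imgPt X.l X.len X.perm (X.perm.symm ⟨1, h⟩))
  else X.l

/-- `Y = ψ(X)`: one step of the right Rauzy induction. -/
def PsiStep {s : ℕ} (X Y : RIET s) : Prop :=
  Y.l = X.l ∧ Y.r = zPoint X ∧
  ∀ z ∈ Set.Ico X.l (zPoint X), Y.T z = inducedMap X.T (Set.Ico X.l (zPoint X)) z

/-- `Y = φ(X)`: one step of the left Rauzy induction. -/
def PhiStep {s : ℕ} (X Y : RIET s) : Prop :=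
  Y.l = yPoint X ∧ Y.r = X.r ∧
  ∀ z ∈ Set.Ico (yPoint X) X.r, Y.T z = inducedMap X.T (Set.Ico (yPoint X) X.r) z

/-- Equivalence of two `s`-interval exchange transformations: `(σ, mu)` is obtained
from `(π, lam)` by rescaling, possibly combined with the reversal `τ : i ↦ s - i + 1`. -/
def IETEquiv (s : ℕ) (π σ : Equiv.Perm (Fin s)) (lam mu : Fin s → ℝ) : Prop :=
  (∃ c : ℝ, 0 < c ∧ σ = π ∧ ∀ i, mu i = c * lam i) ∨
  (∃ c : ℝ, 0 < c ∧ (∀ i, σ i = (π i).rev) ∧ ∀ i, mu i = c * lam i.rev)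

/-- The subring `ℤ[√d]` of `ℝ`. -/
def Zsd (d : ℤ) : Set ℝ := {z | ∃ m n : ℤ, z = (m : ℝ) + (n : ℝ) * Real.sqrt d}

/-- `Ψ(z) = max (|m|,|n|)` for `z = m + n√d` (the representation being unique
when `d ≥ 2` is squarefree). -/
def PsiNum (d : ℤ) (z : ℝ) : ℕ :=
  sInf {k : ℕ | ∃ m n : ℤ, z = (m : ℝ) + (n : ℝ) * Real.sqrt d ∧
    k = max m.natAbs n.natAbs}

/-- `Ψ(S) = max {Ψ(z) : z ∈ ∂S}`. -/
def PsiSet (d : ℤ) (S : Set ℝ) : ℕ := sSup (PsiNum d '' frontier S)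

/-- The reduced complexity `Π(S) = |S| ⬝ Ψ(S)`. -/
def PiSet (d : ℤ) (S : Set ℝ) : ℝ := (volume S).toReal * PsiSet d S

/-- `S` belongs to the algebra `A([l,r))`: a nonempty finite union of semi-intervals
of `[l,r)` with endpoints in `ℤ[√d]`. -/
def MemA (d : ℤ) (l r : ℝ) (S : Set ℝ) : Prop :=
  S.Nonempty ∧ S ⊆ Set.Ico l r ∧
  ∃ (k : ℕ) (a b : Fin k → ℝ), (∀ j, a j ∈ Zsd d ∧ b j ∈ Zsd d ∧ a j < b j) ∧
    S = ⋃ j, Set.Ico (a j) (b j)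

/-- The interval exchange transformation with data `(l, r, len, π)` is defined over
`ℤ[√d]`: `l`, `r`, the separation points and the translation values lie in `ℤ[√d]`. -/
def DefinedOverZ (d : ℤ) (s : ℕ) (l r : ℝ) (len : Fin s → ℝ)
    (π : Equiv.Perm (Fin s)) : Prop :=
  l ∈ Zsd d ∧ r ∈ Zsd d ∧
  ∀ i, sepPt l len i ∈ Zsd d ∧ (imgPt l len π i - sepPt l len i) ∈ Zsd d

/-- Maximal positive return time `ρ⁺(S)`. -/
def rhoPlusSet (T : Equiv.Perm ℝ) (S : Set ℝ) : ℕ :=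
  sInf {n : ℕ | 1 ≤ n ∧ ⇑(T ^ n) '' S ⊆ ⋃ i ∈ Finset.range n, ⇑(T ^ i) '' S}

/-- Maximal negative return time `ρ⁻(S)`. -/
def rhoMinusSet (T : Equiv.Perm ℝ) (S : Set ℝ) : ℕ :=
  sInf {m : ℕ | 1 ≤ m ∧ ⇑(T ^ m) '' S ⊆ ⋃ i ∈ Finset.range m, ⇑(T⁻¹ ^ i) '' S}

/-- Minimal positive return time `σ⁺(S)`. -/
def sigmaPlusSet (T : Equiv.Perm ℝ) (S : Set ℝ) : ℕ :=
  sInf {n : ℕ | 1 ≤ n ∧ (⇑(T ^ n) '' S ∩ S).Nonempty}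

/-- Minimal negative return time `σ⁻(S)`. -/
def sigmaMinusSet (T : Equiv.Perm ℝ) (S : Set ℝ) : ℕ :=
  sInf {m : ℕ | 1 ≤ m ∧ (⇑(T⁻¹ ^ m) '' S ∩ S).Nonempty}

/-- `D_{m,n}(T) = ⋃_{i=-m+1}^{n} T^i (Sep(T))`. -/
def Dmn (s : ℕ) (l : ℝ) (len : Fin s → ℝ) (T : Equiv.Perm ℝ) (m n : ℕ) : Set ℝ :=
  {w | ∃ (i : Fin s) (k : ℤ), -(m : ℤ) + 1 ≤ k ∧ k ≤ (n : ℤ) ∧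
    w = (T ^ k) (sepPt l len i)}

/-- `[u,v)` belongs to `U(T) = ⋃_{m,n ≥ 1} U_{m,n}(T)`: it is one of the
semi-intervals into which `D_{m,n}(T)` partitions `[l,r)`. -/
def MemU (s : ℕ) (l r : ℝ) (len : Fin s → ℝ) (T : Equiv.Perm ℝ) (u v : ℝ) : Prop :=
  ∃ m n : ℕ, 1 ≤ m ∧ 1 ≤ n ∧ u ∈ Dmn s l len T m n ∧
    (v ∈ Dmn s l len T m n ∨ v = r) ∧ ∀ w ∈ Dmn s l len T m n, w ∉ Set.Ioo u v

/-!
Suppose the orbit `O` of `z` is not dense. Then some point `w ∈ (l, r)` of the closure of `O`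
borders a gap, an interval `(w - g, w)` or `(w, w + g)` disjoint from `O`. Near each iterate
`T^k w` that is not a separation point, `T` is a translation, so it carries the gap at `T^k w` to
a gap at `T^(k+1) w`, cut down only where the gap meets a separation point. The iterates are
pairwise distinct (a regular map has no periodic points) and none lies in the gap of another, so
each separation point cuts at most once; the gaps then keep a length bounded below, which is
impossible for infinitely many distinct points of `[l, r)`. Hence some `T^k w` is a separation
point `γ_j`, and likewise, for `T⁻¹`, some `T^(-k') w` is an image point `δ_i = T γ_i`. So
`γ_j = T^(k + k' + 1) γ_i`; as the only relation regularity allows between separation points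
is `l = T γ_{i₀}`, this forces `k = 0` and `γ_j = l`, contradicting `w > l`.
-/

open Filter Topology

theorem tendsto_add_const_nhdsGE (x c : ℝ) :
    Tendsto (· + c) (𝓝[≥] x) (𝓝[≥] (x + c)) :=
  tendsto_nhdsWithin_of_tendsto_nhds_of_eventually_within _
    (((continuous_add_const c).tendsto x).mono_left nhdsWithin_le_nhds)
    (eventually_nhdsWithin_of_forall fun z (hz : x ≤ z) => by simpa using hz)

theorem eventuallyEq_pow_of_forall_lt {σ : Equiv.Perm ℝ} {𝓕 : ℝ → Filter ℝ}
    (h𝓕 : ∀ x c, Tendsto (· + c) (𝓕 x) (𝓕 (x + c))) {x : ℝ} {n : ℕ}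
    (h : ∀ k < n, ⇑σ =ᶠ[𝓕 ((σ ^ k) x)] fun z => z + (σ ((σ ^ k) x) - (σ ^ k) x)) :
    ⇑(σ ^ n) =ᶠ[𝓕 x] fun z => z + ((σ ^ n) x - x) := by
  induction n with
  | zero => exact Eventually.of_forall fun z => by simp
  | succ n ih =>
    have hn := ih fun k hk => h k (by omega)
    have htendsto : Tendsto ⇑(σ ^ n) (𝓕 x) (𝓕 ((σ ^ n) x)) := by
      simpa using (h𝓕 x ((σ ^ n) x - x)).congr' hn.symm
    rw [pow_succ', Equiv.Perm.coe_mul]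
    refine ((h n n.lt_succ_self).comp_tendsto htendsto).trans ?_
    filter_upwards [hn] with z hz
    simp only [Function.comp_apply, hz]
    ring

theorem apply_mem_closure_of_eqOn {σ : ℝ → ℝ} {O U : Set ℝ} {c x : ℝ} (hU : IsOpen U)
    (hσ : EqOn σ (· + c) U) (hO : MapsTo σ O O) (hx : x ∈ U) (hxO : x ∈ closure O) :
    σ x ∈ closure O := by
  have h := mem_closure_image (continuous_add_const c).continuousAt
    (hU.inter_closure ⟨hx, hxO⟩)
  rw [hσ hx]
  refine closure_mono ?_ h
  rintro _ ⟨z, hz, rfl⟩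
  rw [← hσ hz.1]
  exact hO hz.2

theorem disjoint_Ioo_add_of_eqOn {σ : ℝ → ℝ} {O : Set ℝ} {a b c : ℝ}
    (hσ : EqOn σ (· + c) (Ioo a b)) (hO : ∀ z, σ z ∈ O → z ∈ O)
    (hab : Disjoint (Ioo a b) O) : Disjoint (Ioo (a + c) (b + c)) O := by
  refine Set.disjoint_left.mpr fun v hv hvO => ?_
  have hvc : v - c ∈ Ioo a b := ⟨by linarith [hv.1], by linarith [hv.2]⟩
  exact Set.disjoint_left.mp hab hvc (hO _ (by rw [hσ hvc]; simpa using hvO))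

theorem not_injective_of_gaps {u g p : ℕ → ℝ} {E : Set ℝ} (hE : E.Finite)
    (hpE : ∀ k, p k ∈ E) (hu : Bornology.IsBounded (range u)) (hpu : ∀ k, p k < u k)
    (hg0 : 0 < g 0) (hg : ∀ k, g (k + 1) = min (g k) (u k - p k))
    (hsep : ∀ k m, u k ∉ Ioo (u m - g m) (u m)) :
    ¬ Function.Injective u := by
  intro hinj
  have hlt : ∀ k m, u k < u m → u k ≤ u m - g m := fun k m h =>
    not_lt.mp fun h' => hsep k m ⟨h', h⟩
  have hgpos : ∀ k, 0 < g k := fun k => by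
    induction k with
    | zero => exact hg0
    | succ k ih => rw [hg]; exact lt_min ih (sub_pos.mpr (hpu k))
  -- The gap only shrinks at times `k ∈ S`, and then it contains the breakpoint `p k`.
  set S := {k | u k - p k < g k}
  have hS : ∀ k ∈ S, p k ∈ Ioo (u k - g k) (u k) := fun k hk =>
    ⟨by linarith [show u k - p k < g k from hk], hpu k⟩
  have hSinj : InjOn p S := by
    intro k hk m hm hpkm
    by_contra hkm
    rcases (hinj.ne hkm).lt_or_gt with h | h
    · linarith [hlt k m h, (hS k hk).2, (hS m hm).1]
    · linarith [hlt m k h, (hS k hk).1, (hS m hm).2]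
  have hSfin : S.Finite :=
    Finite.of_finite_image (hE.subset (by rintro _ ⟨k, -, rfl⟩; exact hpE k)) hSinj
  have hgrange : range g ⊆ insert (g 0) ((fun k => u k - p k) '' S) := by
    rintro _ ⟨k, rfl⟩
    induction k with
    | zero => exact mem_insert _ _
    | succ k ih =>
      rw [hg]
      by_cases hk : u k - p k < g k
      · rw [min_eq_right hk.le]
        exact mem_insert_of_mem _ ⟨k, hk, rfl⟩
      · rwa [min_eq_left (not_lt.mp hk)]
  obtain ⟨_, ⟨k₀, rfl⟩, hk₀⟩ := (range g).exists_min_image id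
    ((hSfin.image _).insert _ |>.subset hgrange) (range_nonempty g)
  have hδ : ∀ k, g k₀ ≤ g k := fun k => hk₀ _ (mem_range_self k)
  obtain ⟨a, -, φ, hφ, hlim⟩ := tendsto_subseq_of_bounded hu fun n => mem_range_self n
  obtain ⟨N, hN⟩ := Metric.cauchySeq_iff'.mp hlim.cauchySeq (g k₀) (hgpos k₀)
  have hdist := abs_sub_lt_iff.mp (Real.dist_eq _ _ ▸ hN (N + 1) N.le_succ)
  simp only [Function.comp_apply] at hdist
  rcases (hinj.ne (hφ.injective.ne (Nat.lt_succ_self N).ne')).lt_or_gt with h | h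
  · linarith [hlt _ _ h, hδ (φ N)]
  · linarith [hlt _ _ h, hδ (φ (N + 1))]

theorem exists_pow_apply_mem_of_disjoint_Ioo_left {σ : Equiv.Perm ℝ} {K E F O : Set ℝ}
    (hK : Bornology.IsBounded K) (hmaps : MapsTo σ K K)
    (haper : ∀ x ∈ K, ∀ n : ℕ, 0 < n → (σ ^ n) x ≠ x) (hE : E.Finite)
    (hloc : ∀ x ∈ K, x ∉ F →
      ∃ e ∈ E, e < x ∧ ∃ d > 0, EqOn σ (· + (σ x - x)) (Ioo e (x + d)))
    (hO : ∀ z, σ z ∈ O ↔ z ∈ O) {w g : ℝ} (hwK : w ∈ K) (hwO : w ∈ closure O) (hg : 0 < g)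
    (hgap : Disjoint (Ioo (w - g) w) O) : ∃ k : ℕ, (σ ^ k) w ∈ F := by
  by_contra! hF
  set u : ℕ → ℝ := fun k => (σ ^ k) w
  have hu_succ : ∀ k, u (k + 1) = σ (u k) := fun k => by
    simp only [u, pow_succ', Equiv.Perm.mul_apply]
  have huK : ∀ k, u k ∈ K := fun k => by
    simp only [u, Equiv.Perm.coe_pow]
    exact hmaps.iterate k hwK
  choose! e heE hex d hd heq using hloc
  set p : ℕ → ℝ := fun k => e (u k)
  set gap : ℕ → ℝ := fun k => Nat.rec g (fun k gk => min gk (u k - p k)) k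
  have hgap_succ : ∀ k, gap (k + 1) = min (gap k) (u k - p k) := fun k => rfl
  have hstep : ∀ k, u k ∈ closure O ∧ Disjoint (Ioo (u k - gap k) (u k)) O := by
    intro k
    induction k with
    | zero => simpa [u, gap] using ⟨hwO, hgap⟩
    | succ k ih =>
      have heqk := heq (u k) (huK k) (hF k)
      have hmin := min_le_right (gap k) (u k - p k)
      rw [hu_succ]
      refine ⟨apply_mem_closure_of_eqOn isOpen_Ioo heqk (fun z hz => (hO z).mpr hz)
        ⟨hex _ (huK k) (hF k), by linarith [hd _ (huK k) (hF k)]⟩ ih.1, ?_⟩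
      have h := disjoint_Ioo_add_of_eqOn (a := u k - gap (k + 1)) (b := u k)
        (heqk.mono (Ioo_subset_Ioo (by rw [hgap_succ]; linarith)
          (by linarith [hd _ (huK k) (hF k)])))
        (fun z => (hO z).mp) (ih.2.mono_left (Ioo_subset_Ioo_left (by
          rw [hgap_succ]; linarith [min_le_left (gap k) (u k - p k)])))
      convert h using 2 <;> ring
  refine not_injective_of_gaps hE (fun k => heE _ (huK k) (hF k))
    (hK.subset (range_subset_iff.mpr huK)) (fun k => hex _ (huK k) (hF k)) hg hgap_succ
    (fun k m h => Set.disjoint_left.mp ((hstep m).2.closure_right isOpen_Ioo) h (hstep k).1)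
    (Function.Injective.of_lt_imp_ne fun k m hkm hu =>
      haper _ (huK k) (m - k) (by omega) ?_)
  simp only [u, ← Equiv.Perm.mul_apply, ← pow_add, Nat.sub_add_cancel hkm.le] at hu ⊢
  exact hu.symm

theorem exists_pow_apply_mem_of_disjoint_Ioo_right {σ : Equiv.Perm ℝ} {K E F O : Set ℝ}
    (hK : Bornology.IsBounded K) (hmaps : MapsTo σ K K)
    (haper : ∀ x ∈ K, ∀ n : ℕ, 0 < n → (σ ^ n) x ≠ x) (hE : E.Finite)
    (hloc : ∀ x ∈ K, x ∉ F →
      ∃ e ∈ E, x < e ∧ ∃ d > 0, EqOn σ (· + (σ x - x)) (Ioo (x - d) e))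
    (hO : ∀ z, σ z ∈ O ↔ z ∈ O) {w g : ℝ} (hwK : w ∈ K) (hwO : w ∈ closure O) (hg : 0 < g)
    (hgap : Disjoint (Ioo w (w + g)) O) : ∃ k : ℕ, (σ ^ k) w ∈ F := by
  -- Conjugating by `x ↦ -x` turns right gaps into left gaps.
  set τ := Equiv.neg ℝ * σ * (Equiv.neg ℝ)⁻¹
  have hτ : ∀ (k : ℕ) x, (τ ^ k) x = -(σ ^ k) (-x) := fun k x => by
    simp [τ, conj_pow]
  have hτ1 : ∀ x, τ x = -σ (-x) := by simpa using hτ 1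
  obtain ⟨k, hk⟩ := exists_pow_apply_mem_of_disjoint_Ioo_left (σ := τ) (K := -K) (E := -E)
    (F := -F) (O := -O) (w := -w) hK.neg (fun x hx => by simpa [hτ1] using hmaps hx)
    (fun x hx n hn => by simpa [hτ, neg_eq_iff_eq_neg] using haper _ hx n hn) hE.neg
    (fun x hx hxF => by
      obtain ⟨e, he, hxe, d, hd, heq⟩ := hloc (-x) hx hxF
      refine ⟨-e, by simpa using he, by linarith, d, hd, fun z hz => ?_⟩
      have := heq (show -z ∈ Ioo (-x - d) e from ⟨by linarith [hz.2], by linarith [hz.1]⟩)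
      simp only [hτ1] at this ⊢
      linarith)
    (fun z => by simpa [hτ1] using hO (-z)) (by simpa using hwK)
    (by rwa [← neg_closure, Set.mem_neg, neg_neg]) hg
    (Set.disjoint_left.mpr fun z hz hzO => Set.disjoint_left.mp hgap
      (show -z ∈ Ioo w (w + g) from ⟨by linarith [hz.2], by linarith [hz.1]⟩) hzO)
  exact ⟨k, by simpa [hτ] using hk⟩

theorem exists_mem_closure_disjoint_Ioo {O : Set ℝ} {l r y : ℝ} (hO : O ⊆ Ico l r)
    (hOl : ∃ o ∈ O, l < o) (hy : y ∈ Ico l r) (hyO : y ∉ closure O) :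
    ∃ w ∈ closure O, w ∈ Ioo l r ∧ ∃ g > 0,
      Disjoint (Ioo (w - g) w) O ∨ Disjoint (Ioo w (w + g)) O := by
  by_cases hup : ∃ o ∈ O, y < o
  · obtain ⟨o, ho, hyo⟩ := hup
    set C := closure O ∩ Ici y
    have hCbdd : BddBelow C := ⟨y, fun z hz => hz.2⟩
    obtain ⟨hbO, hyb⟩ := (isClosed_closure.inter isClosed_Ici).csInf_mem
      ⟨o, subset_closure ho, hyo.le⟩ hCbdd
    have hyb : y < sInf C := hyb.lt_of_ne fun h => hyO (h ▸ hbO)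
    refine ⟨sInf C, hbO, ⟨hy.1.trans_lt hyb,
      (csInf_le hCbdd ⟨subset_closure ho, hyo.le⟩).trans_lt (hO ho).2⟩,
      sInf C - y, sub_pos.mpr hyb, Or.inl ?_⟩
    rw [sub_sub_cancel]
    exact Set.disjoint_left.mpr fun z hz hzO =>
      (csInf_le hCbdd ⟨subset_closure hzO, hz.1.le⟩).not_gt hz.2
  · push Not at hup
    obtain ⟨o, ho, hlo⟩ := hOl
    have hObdd : BddAbove O := ⟨y, hup⟩
    have hsr : sSup O < r := (csSup_le ⟨o, ho⟩ hup).trans_lt hy.2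
    refine ⟨sSup O, csSup_mem_closure ⟨o, ho⟩ hObdd, ⟨hlo.trans_le (le_csSup hObdd ho), hsr⟩,
      r - sSup O, sub_pos.mpr hsr, Or.inr ?_⟩
    exact Set.disjoint_left.mpr fun z hz hzO => (le_csSup hObdd hzO).not_gt hz.1

structure IsPiecewiseTranslation {ι : Type*} (σ : ℝ → ℝ) (K : Set ℝ) (P L : ι → ℝ) :
    Prop where
  subset_iUnion : K ⊆ ⋃ i, Ico (P i) (P i + L i)
  eqOn : ∀ i, EqOn σ (fun z => z + (σ (P i) - P i)) (Ico (P i) (P i + L i))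

namespace IsPiecewiseTranslation

variable {ι : Type*} {K : Set ℝ} {P L : ι → ℝ}

section Local

variable {σ : ℝ → ℝ} (h : IsPiecewiseTranslation σ K P L) {x : ℝ} (hx : x ∈ K)
include h hx

theorem exists_eqOn_Ico : ∃ i, x ∈ Ico (P i) (P i + L i) ∧
    EqOn σ (fun z => z + (σ x - x)) (Ico (P i) (P i + L i)) := by
  obtain ⟨i, hi⟩ := mem_iUnion.mp (h.subset_iUnion hx)
  refine ⟨i, hi, fun z hz => ?_⟩
  simp only [h.eqOn i hz, h.eqOn i hi]
  ring

theorem eventuallyEq_nhdsGE : σ =ᶠ[𝓝[≥] x] fun z => z + (σ x - x) := by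
  obtain ⟨i, hi, heq⟩ := h.exists_eqOn_Ico hx
  exact eventuallyEq_of_mem (Ico_mem_nhdsGE_of_mem hi) heq

theorem exists_eqOn_Ioo (hxP : x ∉ range P) : ∃ i, x ∈ Ioo (P i) (P i + L i) ∧
    EqOn σ (fun z => z + (σ x - x)) (Ioo (P i) (P i + L i)) := by
  obtain ⟨i, hi, heq⟩ := h.exists_eqOn_Ico hx
  exact ⟨i, ⟨hi.1.lt_of_ne fun he => hxP ⟨i, he⟩, hi.2⟩, heq.mono Ioo_subset_Ico_self⟩

theorem eventuallyEq_nhds (hxP : x ∉ range P) : σ =ᶠ[𝓝 x] fun z => z + (σ x - x) := by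
  obtain ⟨i, hi, heq⟩ := h.exists_eqOn_Ioo hx hxP
  exact eventuallyEq_of_mem (Ioo_mem_nhds hi.1 hi.2) heq

end Local

variable {σ : Equiv.Perm ℝ}

theorem inv (h : IsPiecewiseTranslation σ K P L)
    (hK : K ⊆ ⋃ i, Ico (σ (P i)) (σ (P i) + L i)) :
    IsPiecewiseTranslation ⇑σ⁻¹ K (fun i => σ (P i)) L where
  subset_iUnion := hK
  eqOn i z hz := by
    have hmem : z - (σ (P i) - P i) ∈ Ico (P i) (P i + L i) := by
      constructor <;> linarith [hz.1, hz.2]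
    simp only [Equiv.Perm.coe_inv, Equiv.symm_apply_apply, Equiv.symm_apply_eq]
    rw [show z + (P i - σ (P i)) = z - (σ (P i) - P i) by ring, h.eqOn i hmem]
    ring

theorem eventuallyEq_pow_nhdsGE (h : IsPiecewiseTranslation σ K P L) (hmaps : MapsTo σ K K)
    {x : ℝ} (hx : x ∈ K) (n : ℕ) : ⇑(σ ^ n) =ᶠ[𝓝[≥] x] fun z => z + ((σ ^ n) x - x) :=
  eventuallyEq_pow_of_forall_lt tendsto_add_const_nhdsGE fun k _ =>
    h.eventuallyEq_nhdsGE (Equiv.Perm.coe_pow σ k ▸ hmaps.iterate k hx)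

theorem eventuallyEq_pow_nhds (h : IsPiecewiseTranslation σ K P L) (hmaps : MapsTo σ K K)
    {x : ℝ} (hx : x ∈ K) {n : ℕ} (hP : ∀ k < n, (σ ^ k) x ∉ range P) :
    ⇑(σ ^ n) =ᶠ[𝓝 x] fun z => z + ((σ ^ n) x - x) :=
  eventuallyEq_pow_of_forall_lt (fun x c => (continuous_add_const c).tendsto x) fun k hk =>
    h.eventuallyEq_nhds (Equiv.Perm.coe_pow σ k ▸ hmaps.iterate k hx) (hP k hk)

theorem exists_pow_apply_eq_self {l r : ℝ} (h : IsPiecewiseTranslation σ (Ico l r) P L)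
    (hmaps : MapsTo σ (Ico l r) (Ico l r)) (hl : l ∈ range P) {x : ℝ} (hx : x ∈ Ico l r)
    {n : ℕ} (hn : (σ ^ n) x = x) : ∃ i, (σ ^ n) (P i) = P i := by
  set A := {y ∈ Icc l x | Icc y x ⊆ {z | (σ ^ n) z = z}}
  have hxA : x ∈ A := ⟨⟨hx.1, le_rfl⟩, by simp [hn]⟩
  have hAbdd : BddBelow A := ⟨l, fun y hy => hy.1.1⟩
  set c := sInf A
  have hlc : l ≤ c := le_csInf ⟨x, hxA⟩ fun y hy => hy.1.1
  have hcx : c ≤ x := csInf_le hAbdd hxA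
  have hc : c ∈ Ico l r := ⟨hlc, hcx.trans_lt hx.2⟩
  have hfix_Ioc : ∀ z ∈ Ioc c x, (σ ^ n) z = z := fun z hz => by
    obtain ⟨y, hyA, hyz⟩ := exists_lt_of_csInf_lt ⟨x, hxA⟩ hz.1
    exact hyA.2 ⟨hyz.le, hz.2⟩
  have hfix_c : (σ ^ n) c = c := by
    rcases hcx.eq_or_lt with hcx | hcx
    · rwa [hcx]
    obtain ⟨z, hz, hzc⟩ := (((h.eventuallyEq_pow_nhdsGE hmaps hc n).filter_mono
      (nhdsWithin_mono _ Ioi_subset_Ici_self)).and (Ioc_mem_nhdsGT hcx)).exists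
    linarith [hfix_Ioc z hzc]
  by_cases hP : ∃ k < n, (σ ^ k) c ∈ range P
  · obtain ⟨k, -, i, hi⟩ := hP
    refine ⟨i, ?_⟩
    rw [hi, ← Equiv.Perm.mul_apply, ← pow_add, add_comm, pow_add, Equiv.Perm.mul_apply,
      hfix_c]
  push Not at hP
  rcases hlc.eq_or_lt with hlc | hlc
  · obtain ⟨i, hi⟩ := hl
    exact ⟨i, by rw [hi, hlc, hfix_c]⟩
  -- `σ ^ n` fixes a two-sided neighbourhood of `c`, against the choice of `c`.
  obtain ⟨a, hac, ha⟩ := mem_nhdsLT_iff_exists_Ioo_subset.mp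
    (mem_nhdsWithin_of_mem_nhds (h.eventuallyEq_pow_nhds hmaps hc hP))
  have hyc : max l ((a + c) / 2) < c := max_lt hlc (by linarith [mem_Iio.mp hac])
  have hyA : max l ((a + c) / 2) ∈ A := by
    refine ⟨⟨le_max_left _ _, hyc.le.trans hcx⟩, fun z hz => ?_⟩
    rcases lt_trichotomy z c with hzc | rfl | hzc
    · have hza : a < z := by linarith [le_max_right l ((a + c) / 2), hz.1, mem_Iio.mp hac]
      simpa [hfix_c] using ha ⟨hza, hzc⟩
    · exact hfix_c
    · exact hfix_Ioc z ⟨hzc, hz.2⟩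
  exact absurd (csInf_le hAbdd hyA) (not_le.mpr hyc)

theorem exists_pow_apply_eq_of_gap [Finite ι] {O : Set ℝ}
    (h : IsPiecewiseTranslation σ K P L)
    (hK : Bornology.IsBounded K) (hmaps : MapsTo σ K K)
    (haper : ∀ x ∈ K, ∀ n : ℕ, 0 < n → (σ ^ n) x ≠ x) (hO : ∀ z, σ z ∈ O ↔ z ∈ O)
    {w g : ℝ} (hwK : w ∈ K) (hwO : w ∈ closure O) (hg : 0 < g)
    (hgap : Disjoint (Ioo (w - g) w) O ∨ Disjoint (Ioo w (w + g)) O) :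
    ∃ k : ℕ, ∃ i, (σ ^ k) w = P i := by
  suffices ∃ k : ℕ, (σ ^ k) w ∈ range P by
    obtain ⟨k, i, hi⟩ := this
    exact ⟨k, i, hi.symm⟩
  rcases hgap with hgap | hgap
  · refine exists_pow_apply_mem_of_disjoint_Ioo_left hK hmaps haper (finite_range P)
      (fun x hx hxP => ?_) hO hwK hwO hg hgap
    obtain ⟨i, hi, heq⟩ := h.exists_eqOn_Ioo hx hxP
    exact ⟨P i, mem_range_self i, hi.1, P i + L i - x, sub_pos.mpr hi.2,
      by rwa [add_sub_cancel]⟩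
  · refine exists_pow_apply_mem_of_disjoint_Ioo_right hK hmaps haper
      (finite_range fun i => P i + L i) (fun x hx hxP => ?_) hO hwK hwO hg hgap
    obtain ⟨i, hi, heq⟩ := h.exists_eqOn_Ioo hx hxP
    exact ⟨P i + L i, mem_range_self i, hi.2, x - P i, sub_pos.mpr hi.1,
      by rwa [sub_sub_cancel]⟩

end IsPiecewiseTranslation

theorem apply_mem_orbitZ_iff {T : Equiv.Perm ℝ} {z x : ℝ} :
    T x ∈ orbitZ T z ↔ x ∈ orbitZ T z := by
  constructor
  · rintro ⟨n, hn⟩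
    exact ⟨-1 + n, by simp [zpow_add, hn]⟩
  · rintro ⟨n, rfl⟩
    exact ⟨1 + n, by rw [zpow_one_add, Equiv.Perm.mul_apply]⟩

theorem orbitZ_finite_of_zpow_apply_eq_self {T : Equiv.Perm ℝ} {x : ℝ} {m : ℤ} (hm : m ≠ 0)
    (hx : (T ^ m) x = x) : (orbitZ T x).Finite := by
  refine ((finite_Ico 0 |m|).image fun n => (T ^ n) x).subset ?_
  rintro _ ⟨n, rfl⟩
  refine ⟨n % m, ⟨Int.emod_nonneg n hm, Int.emod_lt_abs n hm⟩, ?_⟩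
  conv_rhs => rw [← Int.emod_add_mul_ediv n m]
  rw [zpow_add, zpow_mul, Equiv.Perm.mul_apply,
    Equiv.Perm.zpow_apply_eq_self_of_apply_eq_self hx]

section IET

variable {s : ℕ} {l r : ℝ} {len : Fin s → ℝ} {π : Equiv.Perm (Fin s)} {T : Equiv.Perm ℝ}

theorem sepPt_of_val_eq_zero {i : Fin s} (hi : (i : ℕ) = 0) : sepPt l len i = l := by
  rw [sepPt, Finset.filter_false_of_mem, Finset.sum_empty, add_zero]
  intro j _ hj
  exact absurd (Fin.lt_def.mp hj) (by omega)

theorem sepPt_of_val_eq_succ {i j : Fin s} (h : (j : ℕ) = i + 1) :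
    sepPt l len j = sepPt l len i + len i := by
  have hfilter : Finset.univ.filter (· < j) = insert i (Finset.univ.filter (· < i)) := by
    ext k
    simp only [Finset.mem_filter, Finset.mem_univ, true_and, Finset.mem_insert, Fin.lt_def,
      Fin.ext_iff]
    omega
  rw [sepPt, sepPt, hfilter, Finset.sum_insert (by simp)]
  ring

theorem sepPt_add_of_val_add_one_eq {i : Fin s} (h : (i : ℕ) + 1 = s) :
    sepPt l len i + len i = l + ∑ j, len j := by
  have hfilter : Finset.univ.filter (· < i) = Finset.univ.erase i := by
    ext k
    simp only [Finset.mem_filter, Finset.mem_univ, true_and, Finset.mem_erase, Fin.lt_def,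
      ne_eq, Fin.ext_iff, and_true]
    omega
  rw [sepPt, hfilter, add_assoc, Finset.sum_erase_add _ _ (Finset.mem_univ _)]

theorem Ico_subset_iUnion_sepPt :
    Ico l (l + ∑ i, len i) ⊆ ⋃ i, Ico (sepPt l len i) (sepPt l len i + len i) := by
  intro w hw
  by_contra hcov
  simp only [mem_iUnion, mem_Ico, not_exists, not_and, not_lt] at hcov
  have hle : ∀ k (hk : k < s), sepPt l len ⟨k, hk⟩ ≤ w := by
    intro k
    induction k with
    | zero => exact fun _ => (sepPt_of_val_eq_zero rfl).trans_le hw.1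
    | succ k ih =>
      exact fun hk => (sepPt_of_val_eq_succ (i := ⟨k, by omega⟩) rfl).trans_le
        (hcov _ (ih (by omega)))
  rcases Nat.eq_zero_or_pos s with rfl | hs
  · simp at hw
  · have hlast := hcov _ (hle (s - 1) (by omega))
    rw [sepPt_add_of_val_add_one_eq (by simp only; omega)] at hlast
    linarith [hw.2]

theorem imgPt_eq_sepPt (i : Fin s) :
    imgPt l len π i = sepPt l (fun k => len (π.symm k)) (π i) := by
  rw [imgPt, sepPt]
  congr 1
  exact Finset.sum_equiv π (by simp) (by simp)

theorem Ico_subset_iUnion_imgPt :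
    Ico l (l + ∑ i, len i) ⊆ ⋃ i, Ico (imgPt l len π i) (imgPt l len π i + len i) := by
  intro w hw
  rw [← Equiv.sum_comp π.symm] at hw
  obtain ⟨k, hk⟩ := mem_iUnion.mp (Ico_subset_iUnion_sepPt hw)
  exact mem_iUnion.mpr ⟨π.symm k, by simpa [imgPt_eq_sepPt] using hk⟩

namespace IsIET

variable (hIET : IsIET s l r len π T)
include hIET

theorem apply_sepPt (i : Fin s) : T (sepPt l len i) = imgPt l len π i := by
  rw [hIET.2.2.2.2 i _ ⟨le_rfl, lt_add_of_pos_right _ (hIET.2.1 i)⟩]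
  ring

theorem isPiecewiseTranslation : IsPiecewiseTranslation T (Ico l r) (sepPt l len) len where
  subset_iUnion := by
    simpa [hIET.2.2.1] using Ico_subset_iUnion_sepPt (l := l) (len := len)
  eqOn i z hz := by rw [hIET.2.2.2.2 i z hz, hIET.apply_sepPt]

theorem isPiecewiseTranslation_inv :
    IsPiecewiseTranslation ⇑T⁻¹ (Ico l r) (imgPt l len π) len := by
  simpa only [hIET.apply_sepPt] using hIET.isPiecewiseTranslation.inv (by
    simpa [hIET.apply_sepPt, hIET.2.2.1] using
      Ico_subset_iUnion_imgPt (l := l) (len := len) (π := π))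

theorem mapsTo_zpow (n : ℤ) : MapsTo ⇑(T ^ n) (Ico l r) (Ico l r) := by
  intro x hx
  by_contra hTx
  have hfix := Equiv.Perm.zpow_apply_eq_self_of_apply_eq_self (hIET.2.2.2.1 _ hTx) n
  rw [(T ^ n).injective hfix] at hTx
  exact hTx hx

theorem mapsTo : MapsTo T (Ico l r) (Ico l r) := by
  simpa using hIET.mapsTo_zpow 1

theorem mapsTo_inv : MapsTo ⇑T⁻¹ (Ico l r) (Ico l r) := by
  simpa using hIET.mapsTo_zpow (-1)

end IsIET

end IET

namespace IsRegularIET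

variable {s : ℕ} {l r : ℝ} {len : Fin s → ℝ} {π : Equiv.Perm (Fin s)} {T : Equiv.Perm ℝ}

theorem eq_of_zpow_apply_sepPt_eq (hreg : IsRegularIET s l len T) {i j : Fin s}
    (hi : (i : ℕ) ≠ 0) (hj : (j : ℕ) ≠ 0) {a b : ℤ}
    (h : (T ^ a) (sepPt l len i) = (T ^ b) (sepPt l len j)) : a = b := by
  have hab : (T ^ (a - b)) (sepPt l len i) = sepPt l len j := by
    rw [sub_eq_neg_add, zpow_add, Equiv.Perm.mul_apply, h, ← Equiv.Perm.mul_apply, ← zpow_add,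
      neg_add_cancel, zpow_zero, Equiv.Perm.one_apply]
  by_contra hne
  by_cases hij : i = j
  · subst hij
    exact hreg.1 i hi (orbitZ_finite_of_zpow_apply_eq_self (sub_ne_zero.mpr hne) hab)
  · exact Set.disjoint_left.mp (hreg.2 i j hi hj hij) ⟨a - b, hab⟩ ⟨0, by simp⟩

variable (hs : 2 ≤ s) (hIET : IsIET s l r len π T) (hreg : IsRegularIET s l len T)
include hs hIET hreg

-- If `π` fixed the first interval, `T` would map `sepPt l len (π⁻¹ 1)` to `sepPt l len 1`.
theorem exists_apply_sepPt_eq_left :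
    ∃ i₀ : Fin s, (i₀ : ℕ) ≠ 0 ∧ T (sepPt l len i₀) = l := by
  obtain ⟨n, rfl⟩ : ∃ n, s = n + 2 := ⟨s - 2, by omega⟩
  refine ⟨π.symm 0, fun h0 => ?_, by
    rw [hIET.apply_sepPt, imgPt_eq_sepPt, Equiv.apply_symm_apply, sepPt_of_val_eq_zero rfl]⟩
  have hπ0 : π.symm 0 = 0 := Fin.ext h0
  have h1 : (π.symm 1 : ℕ) ≠ 0 := fun h => by
    simpa using π.symm.injective (Fin.ext (h.trans h0.symm))
  have hone : ∀ len' : Fin (n + 2) → ℝ, sepPt l len' 1 = l + len' 0 := fun len' => by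
    rw [sepPt_of_val_eq_succ (i := 0) (by simp), sepPt_of_val_eq_zero (by simp)]
  have hstep : (T ^ (1 : ℤ)) (sepPt l len (π.symm 1)) = (T ^ (0 : ℤ)) (sepPt l len 1) := by
    rw [zpow_one, zpow_zero, Equiv.Perm.one_apply, hIET.apply_sepPt, imgPt_eq_sepPt,
      Equiv.apply_symm_apply, hone, hone, hπ0]
  exact one_ne_zero (hreg.eq_of_zpow_apply_sepPt_eq h1 (by simp) hstep)

-- The only relation between separation points is `l = T (sepPt l len i₀)`: the exponent is
-- shifted by one exactly at the separation point `l` of index `0`.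
theorem zpow_apply_sepPt_eq {i j : Fin s} {m : ℤ}
    (h : (T ^ m) (sepPt l len i) = sepPt l len j) :
    m + (if (i : ℕ) = 0 then 1 else 0) = if (j : ℕ) = 0 then 1 else 0 := by
  obtain ⟨i₀, hi₀, hTi₀⟩ := exists_apply_sepPt_eq_left hs hIET hreg
  have hnorm : ∀ k : Fin s, ∃ k' : Fin s, (k' : ℕ) ≠ 0 ∧
      (T ^ (if (k : ℕ) = 0 then 1 else 0 : ℤ)) (sepPt l len k') = sepPt l len k := by
    intro k
    split_ifs with hk
    · exact ⟨i₀, hi₀, by rw [zpow_one, hTi₀, sepPt_of_val_eq_zero hk]⟩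
    · exact ⟨k, hk, by simp⟩
  obtain ⟨i', hi', hii'⟩ := hnorm i
  obtain ⟨j', hj', hjj'⟩ := hnorm j
  refine hreg.eq_of_zpow_apply_sepPt_eq hi' hj' ?_
  rw [zpow_add, Equiv.Perm.mul_apply, hii', h, hjj']

theorem pow_apply_ne_self {x : ℝ} (hx : x ∈ Ico l r) {n : ℕ} (hn : 0 < n) :
    (T ^ n) x ≠ x := by
  intro hfix
  obtain ⟨i, hi⟩ := hIET.isPiecewiseTranslation.exists_pow_apply_eq_self
    hIET.mapsTo ⟨⟨0, by omega⟩, sepPt_of_val_eq_zero rfl⟩ hx hfix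
  have := zpow_apply_sepPt_eq hs hIET hreg (m := n) (by simpa using hi)
  omega

theorem inv_pow_apply_ne_self {x : ℝ} (hx : x ∈ Ico l r) {n : ℕ} (hn : 0 < n) :
    (T⁻¹ ^ n) x ≠ x := by
  rw [inv_pow, Ne, Equiv.Perm.inv_eq_iff_eq, eq_comm]
  exact pow_apply_ne_self hs hIET hreg hx hn

theorem exists_mem_orbitZ_gt {z : ℝ} (hz : z ∈ Ico l r) : ∃ o ∈ orbitZ T z, l < o := by
  by_cases hzl : l < z
  · exact ⟨z, ⟨0, by simp⟩, hzl⟩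
  refine ⟨T z, ⟨1, by simp⟩, (hIET.mapsTo hz).1.lt_of_ne fun h =>
    pow_apply_ne_self hs hIET hreg hz one_pos ?_⟩
  rw [pow_one, ← h]
  exact le_antisymm hz.1 (not_lt.mp hzl)

theorem eq_left_of_pow_apply_eq {w : ℝ} {k k' : ℕ} {i j : Fin s}
    (hki : (T⁻¹ ^ k') w = imgPt l len π i) (hkj : (T ^ k) w = sepPt l len j) : w = l := by
  have hw : w = (T ^ (k' + 1)) (sepPt l len i) := by
    rw [pow_succ, Equiv.Perm.mul_apply, hIET.apply_sepPt, ← hki, inv_pow]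
    simp
  have h := zpow_apply_sepPt_eq hs hIET hreg (m := (k + (k' + 1) : ℕ))
    (by rw [zpow_natCast, pow_add, Equiv.Perm.mul_apply, ← hw, hkj])
  obtain ⟨rfl, hj⟩ : k = 0 ∧ (j : ℕ) = 0 := by split_ifs at h <;> omega
  rwa [pow_zero, Equiv.Perm.one_apply, sepPt_of_val_eq_zero hj] at hkj

end IsRegularIET

/-- Keane. Every regular interval exchange transformation is minimal. -/
theorem regular_isMinimal (s : ℕ) (hs : 2 ≤ s) (l r : ℝ) (len : Fin s → ℝ)
    (π : Equiv.Perm (Fin s)) (T : Equiv.Perm ℝ)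
    (hIET : IsIET s l r len π T) (hreg : IsRegularIET s l len T) :
    IsMinimalOn T l r := by
  intro z hz y hy
  by_contra hyO
  have hO : orbitZ T z ⊆ Ico l r := by
    rintro _ ⟨n, rfl⟩
    exact hIET.mapsTo_zpow n hz
  obtain ⟨w, hwO, hw, g, hg, hgap⟩ :=
    exists_mem_closure_disjoint_Ioo hO (hreg.exists_mem_orbitZ_gt hs hIET hz) hy hyO
  have hK : Bornology.IsBounded (Ico l r) := Metric.isBounded_Ico l r
  obtain ⟨k, j, hkj⟩ := hIET.isPiecewiseTranslation.exists_pow_apply_eq_of_gap hK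
    hIET.mapsTo (fun x hx _ => hreg.pow_apply_ne_self hs hIET hx)
    (fun _ => apply_mem_orbitZ_iff) (Ioo_subset_Ico_self hw) hwO hg hgap
  obtain ⟨k', i, hki⟩ := hIET.isPiecewiseTranslation_inv.exists_pow_apply_eq_of_gap hK
    hIET.mapsTo_inv (fun x hx _ => hreg.inv_pow_apply_ne_self hs hIET hx)
    (fun x => by rw [← apply_mem_orbitZ_iff]; simp) (Ioo_subset_Ico_self hw) hwO hg hgap
  exact hw.1.ne' (hreg.eq_left_of_pow_apply_eq hs hIET hki hkj)

end
end

section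
/- Let T be an interval exchange transformation on [ℓ,r) defined over ℤ[√d]. There exists a constant c > 0 such that for every integer n ≠ 0 and every z ∈ [ℓ,r), either T^n(z) = z or |T^n(z) − z| > c/|n|. -/
open Set MeasureTheory

noncomputable section

/-!
The displacement `T z - z` always lies in the finite set `{0} ∪ {α_i}` of translation values, so
`T^n z - z` is a sum of `|n|` elements of `ℤ[√d]` and hence equals `p + q√d` with `|p|, |q| ≤ |n| M`.
If such a number is nonzero, then so is its conjugate `p - q√d` (as `√d` is irrational), and the
integer `p² - d q²` is their product; hence `|p + q√d| ≥ 1 / |p - q√d| ≥ 1 / (|n| M (1 + √d))`.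
-/

theorem irrational_sqrt_of_squarefree {d : ℤ} (hd : 1 < d) (hsf : Squarefree d) :
    Irrational √d := by
  rw [irrational_sqrt_intCast_iff_of_nonneg (by omega)]
  rintro ⟨k, rfl⟩
  rcases Int.isUnit_iff.mp (hsf k dvd_rfl) with rfl | rfl <;> simp at hd

def zsdBox (d : ℤ) (N : ℝ) : Set ℝ :=
  {x | ∃ p q : ℤ, |(p : ℝ)| ≤ N ∧ |(q : ℝ)| ≤ N ∧ x = p + q * √d}

section zsdBox

variable {d : ℤ} {M N : ℝ} {x y : ℝ}

theorem zero_mem_zsdBox (hN : 0 ≤ N) : 0 ∈ zsdBox d N :=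
  ⟨0, 0, by simpa using hN, by simpa using hN, by simp⟩

theorem add_mem_zsdBox (hx : x ∈ zsdBox d M) (hy : y ∈ zsdBox d N) :
    x + y ∈ zsdBox d (M + N) := by
  obtain ⟨p, q, hp, hq, rfl⟩ := hx
  obtain ⟨p', q', hp', hq', rfl⟩ := hy
  refine ⟨p + p', q + q', ?_, ?_, by push_cast; ring⟩ <;>
    push_cast <;> exact (abs_add_le _ _).trans (by linarith)

theorem neg_mem_zsdBox (hx : x ∈ zsdBox d N) : -x ∈ zsdBox d N := by
  obtain ⟨p, q, hp, hq, rfl⟩ := hx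
  exact ⟨-p, -q, by simpa using hp, by simpa using hq, by push_cast; ring⟩

theorem exists_pos_forall_mem_zsdBox {ι : Type*} [Fintype ι] {f : ι → ℝ}
    (hf : ∀ i, f i ∈ Zsd d) : ∃ M, 0 < M ∧ ∀ i, f i ∈ zsdBox d M := by
  choose p q hpq using hf
  refine ⟨1 + ∑ i, (|(p i : ℝ)| + |(q i : ℝ)|), by positivity, fun i => ⟨p i, q i, ?_, ?_, hpq i⟩⟩
  all_goals
    have := Finset.single_le_sum (f := fun i => |(p i : ℝ)| + |(q i : ℝ)|)
      (fun _ _ => by positivity) (Finset.mem_univ i)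
    linarith [abs_nonneg (p i : ℝ), abs_nonneg (q i : ℝ)]

theorem one_le_mul_abs_of_mem_zsdBox (hd : 0 ≤ d) (hirr : Irrational √d)
    (hx : x ∈ zsdBox d N) (hx0 : x ≠ 0) : 1 ≤ N * (1 + √d) * |x| := by
  obtain ⟨p, q, hp, hq, rfl⟩ := hx
  have hsq : √d ^ 2 = d := Real.sq_sqrt (by exact_mod_cast hd)
  have hconj : (p : ℝ) - q * √d ≠ 0 := by
    intro h
    rcases eq_or_ne q 0 with rfl | hq0
    · exact hx0 (by simp_all)
    · exact hirr ⟨p / q, by push_cast; field_simp; linarith⟩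
  have hnorm : (p : ℝ) ^ 2 - d * q ^ 2 = (p + q * √d) * (p - q * √d) := by
    linear_combination (q : ℝ) ^ 2 * hsq
  have hnorm_int : (1 : ℝ) ≤ |(p : ℝ) ^ 2 - d * q ^ 2| := by
    have : p ^ 2 - d * q ^ 2 ≠ 0 := by
      exact_mod_cast hnorm ▸ mul_ne_zero hx0 hconj
    exact_mod_cast Int.one_le_abs this
  have hconj_le : |(p : ℝ) - q * √d| ≤ N * (1 + √d) := by
    calc |(p : ℝ) - q * √d| ≤ |(p : ℝ)| + |q * √d| := abs_sub _ _
      _ = |(p : ℝ)| + |(q : ℝ)| * √d := by rw [abs_mul, abs_of_nonneg (Real.sqrt_nonneg _)]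
      _ ≤ N * (1 + √d) := by nlinarith [Real.sqrt_nonneg (d : ℝ)]
  calc (1 : ℝ) ≤ |(p : ℝ) - q * √d| * |p + q * √d| := by
        rwa [← abs_mul, mul_comm, ← hnorm]
    _ ≤ N * (1 + √d) * |p + q * √d| := by gcongr

end zsdBox

theorem zpow_apply_sub_mem_zsdBox {d : ℤ} {M : ℝ} {T : Equiv.Perm ℝ}
    (hT : ∀ z, T z - z ∈ zsdBox d M) (n : ℤ) (z : ℝ) :
    (T ^ n) z - z ∈ zsdBox d (|(n : ℝ)| * M) := by
  induction n using Int.induction_on generalizing z with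
  | zero => simpa using zero_mem_zsdBox (d := d) le_rfl
  | succ n ih =>
    have h := add_mem_zsdBox (hT ((T ^ (n : ℤ)) z)) (ih z)
    have hstep : (T ^ ((n : ℤ) + 1)) z = T ((T ^ (n : ℤ)) z) := by
      rw [← Equiv.Perm.mul_apply, ← zpow_one_add, add_comm]
    have hbound : |(((n : ℤ) + 1 : ℤ) : ℝ)| = |((n : ℤ) : ℝ)| + 1 := by
      push_cast
      rw [abs_of_nonneg (by positivity), abs_of_nonneg (by positivity)]
    rw [hstep, hbound]
    convert h using 2 <;> ring
  | pred n ih =>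
    have h := add_mem_zsdBox (neg_mem_zsdBox (hT ((T ^ (-(n : ℤ) - 1)) z))) (ih z)
    have hstep : T ((T ^ (-(n : ℤ) - 1)) z) = (T ^ (-(n : ℤ))) z := by
      rw [← Equiv.Perm.mul_apply, ← zpow_one_add]; ring_nf
    have hbound : |((-(n : ℤ) - 1 : ℤ) : ℝ)| = |((-(n : ℤ) : ℤ) : ℝ)| + 1 := by
      push_cast
      rw [abs_neg, show -(n : ℝ) - 1 = -(n + 1) by ring, abs_neg, abs_of_nonneg (by positivity),
        abs_of_nonneg (by positivity)]
    rw [hstep] at h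
    rw [hbound]
    convert h using 2 <;> ring

section IsIET

variable {s : ℕ} {l r : ℝ} {len : Fin s → ℝ} {π : Equiv.Perm (Fin s)} {T : Equiv.Perm ℝ}

/-- `sepPt` indexed by `ℕ`, so that `partialSepPt l len s = r` closes the last piece. -/
def partialSepPt (l : ℝ) (len : Fin s → ℝ) (k : ℕ) : ℝ :=
  l + ∑ j ∈ Finset.univ.filter (fun j : Fin s => (j : ℕ) < k), len j

theorem partialSepPt_succ (i : Fin s) :
    partialSepPt l len (i + 1) = sepPt l len i + len i := by
  have : Finset.univ.filter (fun j : Fin s => (j : ℕ) < i + 1) =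
      insert i (Finset.univ.filter (fun j : Fin s => j < i)) := by
    ext j
    simp only [Finset.mem_filter, Finset.mem_univ, true_and, Finset.mem_insert, Fin.lt_def,
      Fin.ext_iff]
    omega
  rw [partialSepPt, this, Finset.sum_insert (by simp), sepPt]
  ring

theorem IsIET.exists_mem_piece (hT : IsIET s l r len π T) {z : ℝ} (hz : z ∈ Ico l r) :
    ∃ i : Fin s, z ∈ Ico (sepPt l len i) (sepPt l len i + len i) := by
  have h0 : partialSepPt l len 0 = l := by simp [partialSepPt]
  have hs : partialSepPt l len s = r := by
    simp only [partialSepPt, Fin.is_lt, Finset.filter_true]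
    linarith [hT.2.2.1]
  rw [← h0, ← hs] at hz
  obtain ⟨k, hk, hzk⟩ := mem_iUnion₂.mp (Ico_subset_biUnion_Ico s _ hz)
  refine ⟨⟨k, Finset.mem_range.mp hk⟩, hzk.1, ?_⟩
  rw [← partialSepPt_succ]
  exact hzk.2

theorem IsIET.apply_sub_mem_zsdBox {d : ℤ} {M : ℝ} (hT : IsIET s l r len π T) (hM : 0 ≤ M)
    (hα : ∀ i, imgPt l len π i - sepPt l len i ∈ zsdBox d M) (z : ℝ) :
    T z - z ∈ zsdBox d M := by
  by_cases hz : z ∈ Ico l r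
  · obtain ⟨i, hi⟩ := hT.exists_mem_piece hz
    rw [hT.2.2.2.2 i z hi, add_sub_cancel_left]
    exact hα i
  · rw [hT.2.2.2.1 z hz, sub_self]
    exact zero_mem_zsdBox hM

end IsIET

/-- For an interval exchange transformation defined over `ℤ[√d]`
there is `c > 0` such that for every `n ≠ 0` and `z ∈ [l,r)`, either `T^n z = z`
or `|T^n z - z| > c / |n|`. -/
theorem exists_recurrence_gap (d : ℤ) (hd : 2 ≤ d) (hsf : Squarefree d)
    (s : ℕ) (l r : ℝ) (len : Fin s → ℝ) (π : Equiv.Perm (Fin s)) (T : Equiv.Perm ℝ)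
    (hIET : IsIET s l r len π T) (hdef : DefinedOverZ d s l r len π) :
    ∃ c : ℝ, 0 < c ∧ ∀ n : ℤ, n ≠ 0 → ∀ z ∈ Set.Ico l r,
      (T ^ n) z = z ∨ |(T ^ n) z - z| > c / |(n : ℝ)| := by
  have hirr := irrational_sqrt_of_squarefree (by omega) hsf
  obtain ⟨M, hM, hα⟩ := exists_pos_forall_mem_zsdBox fun i => (hdef.2.2 i).2
  have hstep := hIET.apply_sub_mem_zsdBox hM.le hα
  refine ⟨1 / (2 * M * (1 + √d)), by positivity, fun n hn z _ => ?_⟩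
  refine or_iff_not_imp_left.mpr fun hfix => ?_
  have hgap := one_le_mul_abs_of_mem_zsdBox (by omega) hirr
    (zpow_apply_sub_mem_zsdBox hstep n z) (sub_ne_zero.mpr hfix)
  have hK : 0 < |(n : ℝ)| * M * (1 + √d) := by positivity
  rw [gt_iff_lt, div_div, div_lt_iff₀ (by positivity)]
  nlinarith

end
end
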